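/- Let Q and P̃ be transition kernels of an absorbing Markov game over 𝒮 ∪ {s†} such that Q is (1/H)-multiplicatively accurate to P̃. Let Π_A × Π_B be a set of Markov policy pairs, let π be a probability distribution over Π_A × Π_B, and define the mixture occupancies V^π(1_{h,s,a,b}, ·) := 𝔼_{(μ,ν)∼π}[ V^{μ,ν}(1_{h,s,a,b}, ·) ]. Suppose that sup_{(μ',ν') ∈ Π_A×Π_B} ∑_{h=1}^H ∑_{(s,a,b) ∈ 𝒮×𝒜×ℬ} V^{μ',ν'}(1_{h,s,a,b},Q) / V^π(1_{h,s,a,b},Q) ≤ H·S·A·B, where terms with zero numerator are interpreted as 0. Then sup_{(μ',ν') ∈ Π_A×Π_B} ∑_{h=1}^H ∑_{(s,a,b)} V^{μ',ν'}(1_{h,s,a,b},P̃) / V^π(1_{h,s,a,b},P̃) ≤ 12·H·S·A·B, with the same convention. -/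

import Mathlib

/-!
Between non-absorbing states the kernels `Q` and `P̃` differ by factors in `[1 - 1/H, 1 + 1/H]`,
and the absorbing state `s†` collects no reward. Unrolling the Bellman recursion, every
occupancy `V^{μ,ν}(1_{h,s,a,b}, ·)` therefore changes by a factor between
`(1 - 1/H)^(H-1) ≥ 1/4` and `(1 + 1/H)^(H-1) ≤ e ≤ 3`: only the `H - 1` transitions are
rescaled, not the reward of the first step. Numerator and denominator of each coverage ratio
move by these factors, so the ratio grows by at most `3 / (1/4) = 12`.
-/

/-- Value-to-go of a Markov-policy pair `(μ, ν)` in a finite two-player zero-sum Markov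
game with transition kernel `P` and reward `r`: `Vfuel P r μ ν n h s` is the expected sum
of the rewards collected in the `n` steps `h, h+1, …, h+n−1`, starting from state `s` at
step `h`, the two actions being drawn independently from `μ h s` and `ν h s`. -/
noncomputable def Vfuel {S A B : Type*} [Fintype S] [Fintype A] [Fintype B]
    (P : ℕ → S → A → B → S → ℝ) (r : ℕ → S → A → B → ℝ)
    (μ : ℕ → S → A → ℝ) (ν : ℕ → S → B → ℝ) : ℕ → ℕ → S → ℝ
  | 0, _, _ => 0
  | n + 1, h, s =>
      ∑ a, ∑ b, μ h s a * ν h s b *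
        (r h s a b + ∑ s', P h s a b s' * Vfuel P r μ ν n (h + 1) s')

/-- `val H P r μ ν s₁ = V^{μ,ν}(r, P)`: the expected total reward
`𝔼_{μ×ν}[∑_{h=1}^H r_h(s_h,a_h,b_h)]` over the horizon `H`, starting at `s₁` at step 1. -/
noncomputable def val {S A B : Type*} [Fintype S] [Fintype A] [Fintype B]
    (H : ℕ) (P : ℕ → S → A → B → S → ℝ) (r : ℕ → S → A → B → ℝ)
    (μ : ℕ → S → A → ℝ) (ν : ℕ → S → B → ℝ) (s₁ : S) : ℝ :=
  Vfuel P r μ ν H 1 s₁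

/-- `P` is a valid transition kernel over the steps `h ∈ [H] = {1, …, H}`. -/
def IsKernel {S A B : Type*} [Fintype S] (H : ℕ) (P : ℕ → S → A → B → S → ℝ) : Prop :=
  ∀ h ∈ Finset.Icc 1 H, ∀ s a b, (∀ s', 0 ≤ P h s a b s') ∧ ∑ s', P h s a b s' = 1

/-- `μ` is a valid Markov policy over the steps `h ∈ [H] = {1, …, H}`. -/
def IsPolicy {S A : Type*} [Fintype A] (H : ℕ) (μ : ℕ → S → A → ℝ) : Prop :=
  ∀ h ∈ Finset.Icc 1 H, ∀ s, (∀ a, 0 ≤ μ h s a) ∧ ∑ a, μ h s a = 1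

/-- The indicator reward `1_{h,s,a,b}`, equal to `1` at `(h,s,a,b)` and `0` elsewhere;
`val H P (ind h s a b) μ ν s₁` is the probability of visiting `(s,a,b)` at step `h`. -/
noncomputable def ind {S A B : Type*} [DecidableEq S] [DecidableEq A] [DecidableEq B]
    (h : ℕ) (s : S) (a : A) (b : B) : ℕ → S → A → B → ℝ :=
  fun h' s' a' b' => if h' = h ∧ s' = s ∧ a' = a ∧ b' = b then 1 else 0


open Finset

lemma ind_nonneg {S A B : Type*} [DecidableEq S] [DecidableEq A] [DecidableEq B]
    (h : ℕ) (s : S) (a : A) (b : B) (h' : ℕ) (s' : S) (a' : A) (b' : B) :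
    0 ≤ ind h s a b h' s' a' b' := by
  unfold ind
  split_ifs <;> norm_num

lemma ind_some_apply_none {S A B : Type*} [DecidableEq S] [DecidableEq A] [DecidableEq B]
    (h : ℕ) (s : S) (a : A) (b : B) (h' : ℕ) (a' : A) (b' : B) :
    ind h (some s) a b h' none a' b' = 0 := by
  simp [ind]

lemma one_add_inv_pow_pred_le_three (H : ℕ) : (1 + 1 / (H : ℝ)) ^ (H - 1) ≤ 3 :=
  calc (1 + 1 / (H : ℝ)) ^ (H - 1)
      ≤ (1 + 1 / (H : ℝ)) ^ H :=
        pow_le_pow_right₀ (le_add_of_nonneg_right (by positivity)) (Nat.sub_le H 1)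
    _ ≤ Real.exp 1 := by simpa only [one_div] using Real.one_add_inv_pow_le_exp
    _ ≤ 3 := Real.exp_one_lt_d9.le.trans (by norm_num)

lemma quarter_le_one_sub_inv_pow_pred (H : ℕ) : 1 / 4 ≤ (1 - 1 / (H : ℝ)) ^ (H - 1) := by
  obtain _ | n := H
  · norm_num
  rcases n.eq_zero_or_pos with rfl | hn
  · norm_num
  -- `1 - 1/(n+1)` is the reciprocal of `1 + 1/n`, whose `n`-th power is at most `e`.
  have hrecip : 1 - 1 / ((n + 1 : ℕ) : ℝ) = (1 + (n : ℝ)⁻¹)⁻¹ := by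
    have : (n : ℝ) ≠ 0 := by positivity
    push_cast
    field_simp
    ring
  rw [Nat.add_sub_cancel, hrecip, inv_pow]
  calc (1 / 4 : ℝ) ≤ (Real.exp 1)⁻¹ := by
        rw [one_div]
        exact inv_anti₀ (Real.exp_pos 1) (Real.exp_one_lt_d9.le.trans (by norm_num))
    _ ≤ ((1 + (n : ℝ)⁻¹) ^ n)⁻¹ := inv_anti₀ (by positivity) Real.one_add_inv_pow_le_exp

lemma IsKernel.apply_none_some_eq_zero {S A B : Type*} [Fintype S] {H : ℕ}
    {P : ℕ → Option S → A → B → Option S → ℝ}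
    (hP : IsKernel H P) {h : ℕ} (hh : h ∈ Icc 1 H) {a : A} {b : B}
    (habs : P h none a b none = 1) (s' : S) : P h none a b (some s') = 0 := by
  have hsum := (hP h hh none a b).2
  rw [Fintype.sum_option, habs, add_eq_left] at hsum
  exact (sum_eq_zero_iff_of_nonneg fun t _ => (hP h hh none a b).1 (some t)).1 hsum s'
    (mem_univ s')

lemma div_le_mul_div_of_comparable {N N' D D' α β : ℝ} (hα : 0 ≤ α) (hβ : 0 < β)
    (hN' : 0 ≤ N') (hN : N ≤ α * N') (hD' : 0 ≤ D') (hDlow : β * D' ≤ D) (hDup : D ≤ α * D') :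
    N / D ≤ α / β * (N' / D') := by
  rcases hD'.eq_or_lt with rfl | hD'pos
  · have hD : D = 0 := le_antisymm (by simpa using hDup) (by simpa using hDlow)
    simp [hD]
  calc N / D ≤ α * N' / (β * D') := div_le_div₀ (mul_nonneg hα hN') hN (by positivity) hDlow
    _ = α / β * (N' / D') := mul_div_mul_comm α N' β D'

section Vfuel

variable {S A B : Type*} [Fintype S] [Fintype A] [Fintype B]

lemma Vfuel_succ (P : ℕ → S → A → B → S → ℝ) (r : ℕ → S → A → B → ℝ)
    (μ : ℕ → S → A → ℝ) (ν : ℕ → S → B → ℝ) (n h : ℕ) (s : S) :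
    Vfuel P r μ ν (n + 1) h s = ∑ a, ∑ b, μ h s a * ν h s b *
        (r h s a b + ∑ s', P h s a b s' * Vfuel P r μ ν n (h + 1) s') :=
  rfl

/-- The steps `k, …, k + n - 1` at which `Vfuel _ _ _ _ n k` queries the data lie in
`[1, H]` exactly when `1 ≤ k` and `k + n ≤ H + 1`. -/
lemma Vfuel_nonneg {H : ℕ} {P : ℕ → S → A → B → S → ℝ} {r : ℕ → S → A → B → ℝ}
    {μ : ℕ → S → A → ℝ} {ν : ℕ → S → B → ℝ}
    (hP : ∀ h ∈ Icc 1 H, ∀ s a b s', 0 ≤ P h s a b s') (hr : ∀ h s a b, 0 ≤ r h s a b)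
    (hμ : IsPolicy H μ) (hν : IsPolicy H ν) :
    ∀ n k, 1 ≤ k → k + n ≤ H + 1 → ∀ s, 0 ≤ Vfuel P r μ ν n k s := by
  intro n
  induction n with
  | zero => intro k _ _ s; exact le_rfl
  | succ n ih =>
    intro k hk hkn s
    have hkH : k ∈ Icc 1 H := mem_Icc.2 ⟨hk, by omega⟩
    rw [Vfuel_succ]
    refine sum_nonneg fun a _ => sum_nonneg fun b _ => mul_nonneg
      (mul_nonneg ((hμ k hkH s).1 a) ((hν k hkH s).1 b)) (add_nonneg (hr _ _ _ _) ?_)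
    exact sum_nonneg fun s' _ => mul_nonneg (hP k hkH s a b s') (ih _ (by omega) (by omega) s')

lemma Vfuel_none_eq_zero {H : ℕ} {P : ℕ → Option S → A → B → Option S → ℝ}
    {r : ℕ → Option S → A → B → ℝ} {μ : ℕ → Option S → A → ℝ} {ν : ℕ → Option S → B → ℝ}
    (hP : IsKernel H P) (habs : ∀ h ∈ Icc 1 H, ∀ a b, P h none a b none = 1)
    (hr : ∀ h a b, r h none a b = 0) :
    ∀ n k, 1 ≤ k → k + n ≤ H + 1 → Vfuel P r μ ν n k none = 0 := by
  intro n
  induction n with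
  | zero => intro k _ _; rfl
  | succ n ih =>
    intro k hk hkn
    have hkH : k ∈ Icc 1 H := mem_Icc.2 ⟨hk, by omega⟩
    rw [Vfuel_succ]
    refine sum_eq_zero fun a _ => sum_eq_zero fun b _ => ?_
    rw [Fintype.sum_option, ih _ (by omega) (by omega), hr]
    simp [hP.apply_none_some_eq_zero hkH (habs k hkH a b)]

lemma mul_Vfuel_succ_le_mul_Vfuel_succ {P₁ P₂ : ℕ → S → A → B → S → ℝ}
    {r : ℕ → S → A → B → ℝ} {μ : ℕ → S → A → ℝ} {ν : ℕ → S → B → ℝ} {x y : ℝ} {n k : ℕ} {s : S}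
    (hμ : ∀ a, 0 ≤ μ k s a) (hν : ∀ b, 0 ≤ ν k s b)
    (hstep : ∀ a b, x * (r k s a b + ∑ t, P₁ k s a b t * Vfuel P₁ r μ ν n (k + 1) t) ≤
      y * (r k s a b + ∑ t, P₂ k s a b t * Vfuel P₂ r μ ν n (k + 1) t)) :
    x * Vfuel P₁ r μ ν (n + 1) k s ≤ y * Vfuel P₂ r μ ν (n + 1) k s := by
  rw [Vfuel_succ, Vfuel_succ, mul_sum, mul_sum]
  refine sum_le_sum fun a _ => ?_
  rw [mul_sum, mul_sum]
  refine sum_le_sum fun b _ => ?_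
  rw [mul_left_comm, mul_left_comm y]
  exact mul_le_mul_of_nonneg_left (hstep a b) (mul_nonneg (hμ a) (hν b))

lemma pow_mul_Vfuel_le_pow_mul_Vfuel {H : ℕ} {P₁ P₂ : ℕ → Option S → A → B → Option S → ℝ}
    {r : ℕ → Option S → A → B → ℝ} {μ : ℕ → Option S → A → ℝ} {ν : ℕ → Option S → B → ℝ}
    {c d : ℝ} (hc : 0 ≤ c) (hcd : c ≤ d)
    (hP₁ : IsKernel H P₁) (hP₁abs : ∀ h ∈ Icc 1 H, ∀ a b, P₁ h none a b none = 1)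
    (hP₂ : ∀ h ∈ Icc 1 H, ∀ s a b s', 0 ≤ P₂ h s a b s')
    (hcomp : ∀ h ∈ Icc 1 H, ∀ (s : S) (a : A) (b : B) (s' : S),
      c * P₁ h (some s) a b (some s') ≤ d * P₂ h (some s) a b (some s'))
    (hr : ∀ h s a b, 0 ≤ r h s a b) (hrnone : ∀ h a b, r h none a b = 0)
    (hμ : IsPolicy H μ) (hν : IsPolicy H ν) :
    ∀ n k, 1 ≤ k → k + n ≤ H → ∀ s : S,
      c ^ n * Vfuel P₁ r μ ν (n + 1) k (some s) ≤ d ^ n * Vfuel P₂ r μ ν (n + 1) k (some s) := by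
  have hd : 0 ≤ d := hc.trans hcd
  intro n
  induction n with
  | zero => intro k _ _ s; simp [Vfuel]
  | succ n ih =>
    intro k hk hkn s
    have hkH : k ∈ Icc 1 H := mem_Icc.2 ⟨hk, by omega⟩
    have hV₁ := Vfuel_nonneg (fun h hh s a b => (hP₁ h hh s a b).1) hr hμ hν (n + 1) (k + 1)
      (by omega) (by omega)
    have hV₂ := Vfuel_nonneg hP₂ hr hμ hν (n + 1) (k + 1) (by omega) (by omega)
    have hV₁none := Vfuel_none_eq_zero (μ := μ) (ν := ν) hP₁ hP₁abs hrnone (n + 1) (k + 1)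
      (by omega) (by omega)
    refine mul_Vfuel_succ_le_mul_Vfuel_succ (hμ k hkH (some s)).1 (hν k hkH (some s)).1
      fun a b => ?_
    rw [mul_add, mul_add, mul_sum, mul_sum, Fintype.sum_option, Fintype.sum_option, hV₁none,
      mul_zero, mul_zero]
    refine add_le_add (mul_le_mul_of_nonneg_right (pow_le_pow_left₀ hc hcd _) (hr _ _ _ _))
      (add_le_add (mul_nonneg (pow_nonneg hd _) (mul_nonneg (hP₂ k hkH _ a b _) (hV₂ _)))
        (sum_le_sum fun s' _ => ?_))
    calc c ^ (n + 1) * (P₁ k (some s) a b (some s') * Vfuel P₁ r μ ν (n + 1) (k + 1) (some s'))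
        = (c * P₁ k (some s) a b (some s')) *
            (c ^ n * Vfuel P₁ r μ ν (n + 1) (k + 1) (some s')) := by ring
      _ ≤ (d * P₂ k (some s) a b (some s')) *
            (d ^ n * Vfuel P₂ r μ ν (n + 1) (k + 1) (some s')) :=
        mul_le_mul (hcomp k hkH s a b s') (ih _ (by omega) (by omega) s')
          (mul_nonneg (pow_nonneg hc _) (hV₁ _)) (mul_nonneg hd (hP₂ k hkH _ a b _))
      _ = d ^ (n + 1) *
            (P₂ k (some s) a b (some s') * Vfuel P₂ r μ ν (n + 1) (k + 1) (some s')) := by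
        ring

lemma val_le_three_mul_val {H : ℕ} (hH : 1 ≤ H)
    {Q Ptil : ℕ → Option S → A → B → Option S → ℝ}
    (hQ : ∀ h ∈ Icc 1 H, ∀ s a b s', 0 ≤ Q h s a b s') (hPtil : IsKernel H Ptil)
    (hPtilabs : ∀ h ∈ Icc 1 H, ∀ a b, Ptil h none a b none = 1)
    (hacc : ∀ h ∈ Icc 1 H, ∀ (s : S) (a : A) (b : B) (s' : S),
      Ptil h (some s) a b (some s') ≤ (1 + 1 / (H : ℝ)) * Q h (some s) a b (some s'))
    {r : ℕ → Option S → A → B → ℝ} (hr : ∀ h s a b, 0 ≤ r h s a b)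
    (hrnone : ∀ h a b, r h none a b = 0)
    {μ : ℕ → Option S → A → ℝ} {ν : ℕ → Option S → B → ℝ} (hμ : IsPolicy H μ)
    (hν : IsPolicy H ν) (s₁ : S) :
    val H Ptil r μ ν (some s₁) ≤ 3 * val H Q r μ ν (some s₁) := by
  have hcomp := pow_mul_Vfuel_le_pow_mul_Vfuel zero_le_one
    (le_add_of_nonneg_right (by positivity : (0 : ℝ) ≤ 1 / H)) hPtil hPtilabs hQ
    (fun h hh s a b s' => by simpa only [one_mul] using hacc h hh s a b s') hr hrnone hμ hν
    (H - 1) 1 le_rfl (by omega) s₁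
  rw [one_pow, one_mul, Nat.sub_add_cancel hH] at hcomp
  exact hcomp.trans (mul_le_mul_of_nonneg_right (one_add_inv_pow_pred_le_three H)
    (Vfuel_nonneg hQ hr hμ hν H 1 le_rfl (by omega) (some s₁)))

lemma quarter_mul_val_le_val {H : ℕ} (hH : 1 ≤ H)
    {Q Ptil : ℕ → Option S → A → B → Option S → ℝ}
    (hQ : IsKernel H Q) (hQabs : ∀ h ∈ Icc 1 H, ∀ a b, Q h none a b none = 1)
    (hPtil : ∀ h ∈ Icc 1 H, ∀ s a b s', 0 ≤ Ptil h s a b s')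
    (hacc : ∀ h ∈ Icc 1 H, ∀ (s : S) (a : A) (b : B) (s' : S),
      (1 - 1 / (H : ℝ)) * Q h (some s) a b (some s') ≤ Ptil h (some s) a b (some s'))
    {r : ℕ → Option S → A → B → ℝ} (hr : ∀ h s a b, 0 ≤ r h s a b)
    (hrnone : ∀ h a b, r h none a b = 0)
    {μ : ℕ → Option S → A → ℝ} {ν : ℕ → Option S → B → ℝ} (hμ : IsPolicy H μ)
    (hν : IsPolicy H ν) (s₁ : S) :
    1 / 4 * val H Q r μ ν (some s₁) ≤ val H Ptil r μ ν (some s₁) := by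
  have hinv : 1 / (H : ℝ) ≤ 1 := by
    rw [div_le_one (by positivity)]
    exact_mod_cast hH
  have hcomp := pow_mul_Vfuel_le_pow_mul_Vfuel (sub_nonneg.2 hinv)
    (sub_le_self 1 (by positivity : (0 : ℝ) ≤ 1 / H)) hQ hQabs hPtil
    (fun h hh s a b s' => by simpa only [one_mul] using hacc h hh s a b s') hr hrnone hμ hν
    (H - 1) 1 le_rfl (by omega) s₁
  rw [one_pow, one_mul, Nat.sub_add_cancel hH] at hcomp
  exact (mul_le_mul_of_nonneg_right (quarter_le_one_sub_inv_pow_pred H)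
    (Vfuel_nonneg (fun h hh s a b => (hQ h hh s a b).1) hr hμ hν H 1 le_rfl (by omega)
      (some s₁))).trans hcomp

lemma mixture_val_ratio_le_twelve_mul {H : ℕ} (hH : 1 ≤ H)
    {Q Ptil : ℕ → Option S → A → B → Option S → ℝ}
    (hQ : IsKernel H Q) (hPtil : IsKernel H Ptil)
    (hQabs : ∀ h ∈ Icc 1 H, ∀ a b, Q h none a b none = 1)
    (hPtilabs : ∀ h ∈ Icc 1 H, ∀ a b, Ptil h none a b none = 1)
    (hacc : ∀ h ∈ Icc 1 H, ∀ (s : S) (a : A) (b : B) (s' : S),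
      (1 - 1 / (H : ℝ)) * Q h (some s) a b (some s') ≤ Ptil h (some s) a b (some s') ∧
        Ptil h (some s) a b (some s') ≤ (1 + 1 / (H : ℝ)) * Q h (some s) a b (some s'))
    {r : ℕ → Option S → A → B → ℝ} (hr : ∀ h s a b, 0 ≤ r h s a b)
    (hrnone : ∀ h a b, r h none a b = 0)
    {ι : Type*} [Fintype ι] {w : ι → ℝ} (hw : ∀ i, 0 ≤ w i)
    {μs : ι → ℕ → Option S → A → ℝ} {νs : ι → ℕ → Option S → B → ℝ}
    (hμs : ∀ i, IsPolicy H (μs i)) (hνs : ∀ i, IsPolicy H (νs i))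
    {μ : ℕ → Option S → A → ℝ} {ν : ℕ → Option S → B → ℝ} (hμ : IsPolicy H μ)
    (hν : IsPolicy H ν) (s₁ : S) :
    val H Ptil r μ ν (some s₁) / ∑ i, w i * val H Ptil r (μs i) (νs i) (some s₁) ≤
      12 * (val H Q r μ ν (some s₁) / ∑ i, w i * val H Q r (μs i) (νs i) (some s₁)) := by
  have hQ₀ : ∀ h ∈ Icc 1 H, ∀ s a b s', 0 ≤ Q h s a b s' := fun h hh s a b => (hQ h hh s a b).1
  have hPtil₀ : ∀ h ∈ Icc 1 H, ∀ s a b s', 0 ≤ Ptil h s a b s' :=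
    fun h hh s a b => (hPtil h hh s a b).1
  have hup {μ ν} (hμ : IsPolicy H μ) (hν : IsPolicy H ν) :=
    val_le_three_mul_val hH hQ₀ hPtil hPtilabs (fun h hh s a b s' => (hacc h hh s a b s').2)
      hr hrnone hμ hν s₁
  have hlow {μ ν} (hμ : IsPolicy H μ) (hν : IsPolicy H ν) :=
    quarter_mul_val_le_val hH hQ hQabs hPtil₀ (fun h hh s a b s' => (hacc h hh s a b s').1)
      hr hrnone hμ hν s₁
  have hval₀ {μ ν} (hμ : IsPolicy H μ) (hν : IsPolicy H ν) :
      0 ≤ val H Q r μ ν (some s₁) :=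
    Vfuel_nonneg hQ₀ hr hμ hν H 1 le_rfl (by omega) (some s₁)
  calc _ ≤ 3 / (1 / 4) * (val H Q r μ ν (some s₁) /
        ∑ i, w i * val H Q r (μs i) (νs i) (some s₁)) := by
        refine div_le_mul_div_of_comparable (by norm_num) (by norm_num) (hval₀ hμ hν)
          (hup hμ hν) (sum_nonneg fun i _ => mul_nonneg (hw i) (hval₀ (hμs i) (hνs i))) ?_ ?_
        · rw [mul_sum]
          exact sum_le_sum fun i _ => by
            rw [mul_left_comm]
            exact mul_le_mul_of_nonneg_left (hlow (hμs i) (hνs i)) (hw i)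
        · rw [mul_sum]
          exact sum_le_sum fun i _ => by
            rw [mul_left_comm]
            exact mul_le_mul_of_nonneg_left (hup (hμs i) (hνs i)) (hw i)
    _ = _ := by norm_num

end Vfuel

theorem stmt7_general {S A B : Type*} [Fintype S] [Fintype A] [Fintype B]
    [DecidableEq S] [DecidableEq A] [DecidableEq B]
    (H : ℕ) (hH : 1 ≤ H)
    (Q Ptil : ℕ → Option S → A → B → Option S → ℝ)
    (hQ : IsKernel H Q) (hPtil : IsKernel H Ptil)
    (hQabs : ∀ h ∈ Finset.Icc 1 H, ∀ a b, Q h none a b none = 1)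
    (hPtilabs : ∀ h ∈ Finset.Icc 1 H, ∀ a b, Ptil h none a b none = 1)
    (hacc : ∀ h ∈ Finset.Icc 1 H, ∀ (s : S) (a : A) (b : B) (s' : S),
      (1 - 1 / (H : ℝ)) * Q h (some s) a b (some s') ≤ Ptil h (some s) a b (some s') ∧
        Ptil h (some s) a b (some s') ≤ (1 + 1 / (H : ℝ)) * Q h (some s) a b (some s'))
    (PiA : Set (ℕ → Option S → A → ℝ)) (PiB : Set (ℕ → Option S → B → ℝ))
    (hPiA : ∀ μ' ∈ PiA, IsPolicy H μ') (hPiB : ∀ ν' ∈ PiB, IsPolicy H ν')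
    (idx : Type*) [Fintype idx]
    (w : idx → ℝ) (hw0 : ∀ i, 0 ≤ w i)
    (μs : idx → ℕ → Option S → A → ℝ) (νs : idx → ℕ → Option S → B → ℝ)
    (hmem : ∀ i, μs i ∈ PiA ∧ νs i ∈ PiB)
    (s₁ : S)
    (hcover : ∀ μ' ∈ PiA, ∀ ν' ∈ PiB,
      ∑ h ∈ Finset.Icc 1 H, ∑ s : S, ∑ a : A, ∑ b : B,
          val H Q (ind h (some s) a b) μ' ν' (some s₁) /
            (∑ i, w i * val H Q (ind h (some s) a b) (μs i) (νs i) (some s₁))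
        ≤ (H : ℝ) * Fintype.card S * Fintype.card A * Fintype.card B) :
    ∀ μ' ∈ PiA, ∀ ν' ∈ PiB,
      ∑ h ∈ Finset.Icc 1 H, ∑ s : S, ∑ a : A, ∑ b : B,
          val H Ptil (ind h (some s) a b) μ' ν' (some s₁) /
            (∑ i, w i * val H Ptil (ind h (some s) a b) (μs i) (νs i) (some s₁))
        ≤ 12 * (H : ℝ) * Fintype.card S * Fintype.card A * Fintype.card B := by
  intro μ' hμ' ν' hν'
  have hterm (h : ℕ) (s : S) (a : A) (b : B) :=
    mixture_val_ratio_le_twelve_mul hH hQ hPtil hQabs hPtilabs hacc (ind_nonneg h (some s) a b)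
      (ind_some_apply_none h s a b) hw0 (fun i => hPiA _ (hmem i).1)
      (fun i => hPiB _ (hmem i).2) (hPiA μ' hμ') (hPiB ν' hν') s₁
  calc _ ≤ ∑ h ∈ Icc 1 H, ∑ s : S, ∑ a : A, ∑ b : B,
          12 * (val H Q (ind h (some s) a b) μ' ν' (some s₁) /
            (∑ i, w i * val H Q (ind h (some s) a b) (μs i) (νs i) (some s₁))) := by
        gcongr with h _ s _ a _ b _
        exact hterm h s a b
    _ = 12 * ∑ h ∈ Icc 1 H, ∑ s : S, ∑ a : A, ∑ b : B,
          val H Q (ind h (some s) a b) μ' ν' (some s₁) /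
            (∑ i, w i * val H Q (ind h (some s) a b) (μs i) (νs i) (some s₁)) := by
        simp only [mul_sum]
    _ ≤ 12 * ((H : ℝ) * Fintype.card S * Fintype.card A * Fintype.card B) := by
        gcongr
        exact hcover μ' hμ' ν' hν'
    _ = _ := by ring

/-- Transfer of uniform coverage from the intermediate kernel `Q` to the
absorbing kernel `P̃` it approximates: on an absorbing Markov game over `Option S`
(`none` = `s†`), if `Q` is `(1/H)`-multiplicatively accurate to `P̃`, and the mixture `π`
(a finitely supported distribution `w` over policy pairs `(μs i, νs i) ∈ Π_A × Π_B`)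
satisfies `∑_{h,s,a,b} V^{μ',ν'}(1_{h,s,a,b},Q) / V^π(1_{h,s,a,b},Q) ≤ H·S·A·B` for all
`(μ',ν') ∈ Π_A × Π_B`, then
`∑_{h,s,a,b} V^{μ',ν'}(1_{h,s,a,b},P̃) / V^π(1_{h,s,a,b},P̃) ≤ 12·H·S·A·B` for all
`(μ',ν') ∈ Π_A × Π_B` (terms with zero numerator count as `0`). -/
theorem stmt7 {S A B : Type*} [Fintype S] [Fintype A] [Fintype B]
    [DecidableEq S] [DecidableEq A] [DecidableEq B]
    (H : ℕ) (hH : 1 ≤ H)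
    (Q Ptil : ℕ → Option S → A → B → Option S → ℝ)
    (hQ : IsKernel H Q) (hPtil : IsKernel H Ptil)
    (hQabs : ∀ h ∈ Finset.Icc 1 H, ∀ a b, Q h none a b none = 1)
    (hPtilabs : ∀ h ∈ Finset.Icc 1 H, ∀ a b, Ptil h none a b none = 1)
    (hacc : ∀ h ∈ Finset.Icc 1 H, ∀ (s : S) (a : A) (b : B) (s' : S),
      (1 - 1 / (H : ℝ)) * Q h (some s) a b (some s') ≤ Ptil h (some s) a b (some s') ∧
        Ptil h (some s) a b (some s') ≤ (1 + 1 / (H : ℝ)) * Q h (some s) a b (some s'))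
    (PiA : Set (ℕ → Option S → A → ℝ)) (PiB : Set (ℕ → Option S → B → ℝ))
    (hPiA : ∀ μ' ∈ PiA, IsPolicy H μ') (hPiB : ∀ ν' ∈ PiB, IsPolicy H ν')
    (idx : Type*) [Fintype idx]
    (w : idx → ℝ) (hw0 : ∀ i, 0 ≤ w i) (hw1 : ∑ i, w i = 1)
    (μs : idx → ℕ → Option S → A → ℝ) (νs : idx → ℕ → Option S → B → ℝ)
    (hmem : ∀ i, μs i ∈ PiA ∧ νs i ∈ PiB)
    (s₁ : S)
    (hcover : ∀ μ' ∈ PiA, ∀ ν' ∈ PiB,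
      ∑ h ∈ Finset.Icc 1 H, ∑ s : S, ∑ a : A, ∑ b : B,
          val H Q (ind h (some s) a b) μ' ν' (some s₁) /
            (∑ i, w i * val H Q (ind h (some s) a b) (μs i) (νs i) (some s₁))
        ≤ (H : ℝ) * Fintype.card S * Fintype.card A * Fintype.card B) :
    ∀ μ' ∈ PiA, ∀ ν' ∈ PiB,
      ∑ h ∈ Finset.Icc 1 H, ∑ s : S, ∑ a : A, ∑ b : B,
          val H Ptil (ind h (some s) a b) μ' ν' (some s₁) /
            (∑ i, w i * val H Ptil (ind h (some s) a b) (μs i) (νs i) (some s₁))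
        ≤ 12 * (H : ℝ) * Fintype.card S * Fintype.card A * Fintype.card B :=
  stmt7_general H hH Q Ptil hQ hPtil hQabs hPtilabs hacc PiA PiB hPiA hPiB idx w hw0 μs νs hmem s₁
    hcover
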